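/- arXiv:2102.11686 — 9 statements merged into one kernel-verified Lean document; each statement's English description precedes it below -/
import Mathlib

section
/- Every strategy-proof voting rule φ : Λ^n → Λ is 1-Lipschitz with respect to the L¹-norm on ℝ^n: for all profiles r, s, |φ(r) − φ(s)| ≤ ∑_i |r_i − s_i|. In particular φ is continuous. -/
/-!
Moving a single voter's report from `a` to `b` moves the outcome monotonically in the direction
of the report on both readings of strategy-proofness (`a → b` and `b → a`), and combining the two
bounds the change of the outcome by `|b - a|`. Changing the coordinates of a profile one at a
time then bounds `|φ r - φ s|` by the L¹-distance of `r` and `s`.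
-/

open Function

lemma abs_sub_le_of_between {x y a b : ℝ}
    (hxy : (y ≥ x ∧ x ≥ a) ∨ (y ≤ x ∧ x ≤ a)) (hyx : (x ≥ y ∧ y ≥ b) ∨ (x ≤ y ∧ y ≤ b)) :
    |y - x| ≤ |b - a| := by
  rw [abs_sub_le_iff]
  rcases hxy with ⟨h₁, h₂⟩ | ⟨h₁, h₂⟩ <;> rcases hyx with ⟨h₃, h₄⟩ | ⟨h₃, h₄⟩ <;>
    constructor <;> linarith [le_abs_self (b - a), neg_abs_le (b - a)]

section CoordinatewiseLipschitz

variable {ι α β : Type*} [Fintype ι] [DecidableEq ι] [PseudoMetricSpace α] [PseudoMetricSpace β]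

lemma dist_le_sum_dist_of_dist_update_le (S : Set α) (f : (ι → α) → β)
    (hf : ∀ r : ι → α, (∀ j, r j ∈ S) → ∀ i, ∀ x ∈ S, dist (f (update r i x)) (f r) ≤ dist x (r i))
    (r s : ι → α) (hr : ∀ j, r j ∈ S) (hs : ∀ j, s j ∈ S) :
    dist (f r) (f s) ≤ ∑ i, dist (r i) (s i) := by
  suffices key : ∀ t : Finset ι, ∀ r : ι → α, (∀ j, r j ∈ S) → (∀ j ∉ t, r j = s j) →
      dist (f r) (f s) ≤ ∑ i ∈ t, dist (r i) (s i) from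
    key Finset.univ r hr fun j hj => absurd (Finset.mem_univ j) hj
  intro t
  induction t using Finset.induction_on with
  | empty =>
    intro r _ hrs
    simp [funext fun j => hrs j (Finset.notMem_empty j)]
  | insert a t hat ih =>
    intro r hr hrs
    set r' := update r a (s a)
    have hr' : ∀ j, r' j ∈ S := by
      intro j
      rcases eq_or_ne j a with rfl | hja
      · simpa [r'] using hs j
      · simpa [r', hja] using hr j
    have hr's : ∀ j ∉ t, r' j = s j := by
      intro j hj
      rcases eq_or_ne j a with rfl | hja
      · simp [r']
      · simpa [r', hja] using hrs j (by simp [hja, hj])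
    have hsum : ∑ i ∈ t, dist (r' i) (s i) = ∑ i ∈ t, dist (r i) (s i) :=
      Finset.sum_congr rfl fun i hi => by simp only [r', update_of_ne (ne_of_mem_of_not_mem hi hat)]
    have hstep : dist (f r) (f r') ≤ dist (r a) (s a) := by
      simpa [r'] using hf r' hr' a (r a) (hr a)
    calc dist (f r) (f s) ≤ dist (f r) (f r') + dist (f r') (f s) := dist_triangle _ _ _
      _ ≤ dist (r a) (s a) + ∑ i ∈ t, dist (r i) (s i) := add_le_add hstep (hsum ▸ ih r' hr' hr's)
      _ = ∑ i ∈ insert a t, dist (r i) (s i) := by rw [Finset.sum_insert hat]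

end CoordinatewiseLipschitz

lemma lipschitzOnWith_card_of_dist_le_sum_dist {ι α β : Type*} [Fintype ι]
    [PseudoMetricSpace α] [PseudoMetricSpace β] {f : (ι → α) → β} {D : Set (ι → α)}
    (hf : ∀ r ∈ D, ∀ s ∈ D, dist (f r) (f s) ≤ ∑ i, dist (r i) (s i)) :
    LipschitzOnWith (Fintype.card ι) f D := by
  refine LipschitzOnWith.of_dist_le_mul fun r hr s hs => ?_
  calc dist (f r) (f s) ≤ ∑ i, dist (r i) (s i) := hf r hr s hs
    _ ≤ ∑ _i : ι, dist r s := Finset.sum_le_sum fun i _ => dist_le_pi_dist r s i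
    _ = Fintype.card ι * dist r s := by simp

theorem sp_lipschitz_L1_general
    (Λ : Set ℝ) (n : ℕ) (φ : (Fin n → ℝ) → ℝ)
    (hSP : ∀ r s : Fin n → ℝ, (∀ j, r j ∈ Λ) → (∀ j, s j ∈ Λ) →
      ∀ i : Fin n, (∀ j, j ≠ i → s j = r j) →
      (φ s ≥ φ r ∧ φ r ≥ r i) ∨ (φ s ≤ φ r ∧ φ r ≤ r i)) :
    (∀ r s : Fin n → ℝ, (∀ j, r j ∈ Λ) → (∀ j, s j ∈ Λ) →
      |φ r - φ s| ≤ ∑ i, |r i - s i|) ∧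
    ContinuousOn φ {r : Fin n → ℝ | ∀ j, r j ∈ Λ} := by
  have hstep : ∀ r : Fin n → ℝ, (∀ j, r j ∈ Λ) → ∀ i, ∀ x ∈ Λ,
      dist (φ (update r i x)) (φ r) ≤ dist x (r i) := by
    intro r hr i x hx
    have hr' : ∀ j, update r i x j ∈ Λ := by
      intro j
      rcases eq_or_ne j i with rfl | hji
      · simpa using hx
      · simpa [hji] using hr j
    have hto := hSP r _ hr hr' i fun j hji => update_of_ne hji x r
    have hfrom := hSP _ r hr' hr i fun j hji => (update_of_ne hji x r).symm
    rw [update_self] at hfrom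
    simpa only [Real.dist_eq] using abs_sub_le_of_between hto hfrom
  have hL1 := dist_le_sum_dist_of_dist_update_le Λ φ hstep
  refine ⟨fun r s hr hs => by simpa only [Real.dist_eq] using hL1 r s hr hs, ?_⟩
  exact (lipschitzOnWith_card_of_dist_le_sum_dist fun r hr s hs => hL1 r s hr hs).continuousOn

/-- A strategy-proof voting rule is 1-Lipschitz for the L¹-norm,
and in particular continuous on the domain of profiles. -/
theorem sp_lipschitz_L1
    (Λ : Set ℝ) (n : ℕ) (φ : (Fin n → ℝ) → ℝ)
    (hrange : ∀ r : Fin n → ℝ, (∀ j, r j ∈ Λ) → φ r ∈ Λ)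
    (hSP : ∀ r s : Fin n → ℝ, (∀ j, r j ∈ Λ) → (∀ j, s j ∈ Λ) →
      ∀ i : Fin n, (∀ j, j ≠ i → s j = r j) →
      (φ s ≥ φ r ∧ φ r ≥ r i) ∨ (φ s ≤ φ r ∧ φ r ≤ r i)) :
    (∀ r s : Fin n → ℝ, (∀ j, r j ∈ Λ) → (∀ j, s j ∈ Λ) →
      |φ r - φ s| ≤ ∑ i, |r i - s i|) ∧
    ContinuousOn φ {r : Fin n → ℝ | ∀ j, r j ∈ Λ} :=
  sp_lipschitz_L1_general Λ n φ hSP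
end

section
/- Let Λ = [μ⁻, μ⁺] ⊆ ℝ be a closed interval. A strategy-proof voting rule φ : Λ^n → Λ that takes the value μ⁻ (respectively μ⁺) at some profile all of whose coordinates lie in the open interval is constant equal to μ⁻ (resp. μ⁺). Equivalently: a strategy-proof rule φ : Λ^n → Λ with φ(r) = μ⁻ for some r with all r_i > μ⁻ satisfies φ(s) = μ⁻ for all s. -/
/-!
Changing one voter's report from `r i` to anything, at a profile `r` whose outcome `φ r` lies
strictly below `r i`, can only lower the outcome. When `φ r = μ⁻` it therefore stays `μ⁻`, since
the outcome cannot drop below `μ⁻`. Replacing the coordinates of `r` by those of `s` one voter at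
a time, every voter still to be moved reports `r i > μ⁻`, so the outcome is `μ⁻` all the way to `s`.
-/

open Function

/-- A unilateral deviation of voter `i` never moves the outcome strictly towards the report `r i`. -/
def IsStrategyProof {ι : Type*} (Λ : Set ℝ) (φ : (ι → ℝ) → ℝ) : Prop :=
  ∀ r s : ι → ℝ, (∀ j, r j ∈ Λ) → (∀ j, s j ∈ Λ) →
    ∀ i : ι, (∀ j, j ≠ i → s j = r j) →
      (φ s ≥ φ r ∧ φ r ≥ r i) ∨ (φ s ≤ φ r ∧ φ r ≤ r i)

namespace IsStrategyProof

variable {ι : Type*} {Λ : Set ℝ} {φ : (ι → ℝ) → ℝ}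

theorem le_update_of_lt [DecidableEq ι] (hφ : IsStrategyProof Λ φ) {r : ι → ℝ}
    (hr : ∀ j, r j ∈ Λ) {i : ι} {x : ℝ} (hx : x ∈ Λ) (hlt : φ r < r i) :
    φ (update r i x) ≤ φ r := by
  have hupd : ∀ j, update r i x j ∈ Λ := by
    intro j
    rcases eq_or_ne j i with rfl | hj
    · simpa using hx
    · simpa [hj] using hr j
  rcases hφ r (update r i x) hr hupd i (fun j hj => update_of_ne hj x r) with
    ⟨-, hge⟩ | ⟨hle, -⟩
  · exact absurd hge hlt.not_ge
  · exact hle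

theorem piecewise_eq_of_lt [DecidableEq ι] (hφ : IsStrategyProof Λ φ) {a : ℝ}
    (hlow : ∀ t : ι → ℝ, (∀ j, t j ∈ Λ) → a ≤ φ t) {r s : ι → ℝ}
    (hr : ∀ j, r j ∈ Λ) (hs : ∀ j, s j ∈ Λ) (hlt : ∀ j, a < r j) (hval : φ r = a)
    (A : Finset ι) : φ (A.piecewise s r) = a := by
  have hmem : ∀ (B : Finset ι) j, B.piecewise s r j ∈ Λ := fun B j =>
    B.piecewise_cases s r (· ∈ Λ) (hs j) (hr j)
  induction A using Finset.induction_on with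
  | empty => simpa using hval
  | insert i A hi ih =>
    rw [Finset.piecewise_insert]
    have hri : a < A.piecewise s r i := by
      rw [Finset.piecewise_eq_of_notMem _ _ _ hi]
      exact hlt i
    refine le_antisymm ?_ (hlow _ fun j => ?_)
    · calc φ (update (A.piecewise s r) i (s i)) ≤ φ (A.piecewise s r) :=
            hφ.le_update_of_lt (hmem A) (hs i) (ih ▸ hri)
        _ = a := ih
    · rw [← Finset.piecewise_insert]
      exact hmem _ j

theorem eq_of_eq_of_lt [Fintype ι] (hφ : IsStrategyProof Λ φ) {a : ℝ}
    (hlow : ∀ t : ι → ℝ, (∀ j, t j ∈ Λ) → a ≤ φ t) {r : ι → ℝ}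
    (hr : ∀ j, r j ∈ Λ) (hlt : ∀ j, a < r j) (hval : φ r = a)
    {s : ι → ℝ} (hs : ∀ j, s j ∈ Λ) : φ s = a := by
  classical
  simpa using hφ.piecewise_eq_of_lt hlow hr hs hlt hval Finset.univ

end IsStrategyProof

theorem sp_extreme_value_constant_general
    (μm μp : ℝ) (n : ℕ) (φ : (Fin n → ℝ) → ℝ)
    (hrange : ∀ r : Fin n → ℝ, (∀ j, r j ∈ Set.Icc μm μp) → φ r ∈ Set.Icc μm μp)
    (hSP : ∀ r s : Fin n → ℝ, (∀ j, r j ∈ Set.Icc μm μp) → (∀ j, s j ∈ Set.Icc μm μp) →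
      ∀ i : Fin n, (∀ j, j ≠ i → s j = r j) →
      (φ s ≥ φ r ∧ φ r ≥ r i) ∨ (φ s ≤ φ r ∧ φ r ≤ r i))
    (r : Fin n → ℝ) (hr : ∀ j, r j ∈ Set.Icc μm μp) (hr' : ∀ j, μm < r j)
    (hval : φ r = μm) :
    ∀ s : Fin n → ℝ, (∀ j, s j ∈ Set.Icc μm μp) → φ s = μm := fun _ hs =>
  IsStrategyProof.eq_of_eq_of_lt (Λ := Set.Icc μm μp) hSP (fun t ht => (hrange t ht).1)
    hr hr' hval hs

/-- On Λ = [μ⁻, μ⁺], a strategy-proof rule that attains the value μ⁻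
at a profile with all coordinates strictly above μ⁻ is constantly μ⁻. -/
theorem sp_extreme_value_constant
    (μm μp : ℝ) (hμ : μm ≤ μp) (n : ℕ) (φ : (Fin n → ℝ) → ℝ)
    (hrange : ∀ r : Fin n → ℝ, (∀ j, r j ∈ Set.Icc μm μp) → φ r ∈ Set.Icc μm μp)
    (hSP : ∀ r s : Fin n → ℝ, (∀ j, r j ∈ Set.Icc μm μp) → (∀ j, s j ∈ Set.Icc μm μp) →
      ∀ i : Fin n, (∀ j, j ≠ i → s j = r j) →
      (φ s ≥ φ r ∧ φ r ≥ r i) ∨ (φ s ≤ φ r ∧ φ r ≤ r i))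
    (r : Fin n → ℝ) (hr : ∀ j, r j ∈ Set.Icc μm μp) (hr' : ∀ j, μm < r j)
    (hval : φ r = μm) :
    ∀ s : Fin n → ℝ, (∀ j, s j ∈ Set.Icc μm μp) → φ s = μm :=
  sp_extreme_value_constant_general μm μp n φ hrange hSP r hr hr' hval
end

section
/- Let φ : [0,1]^n → [0,1] be defined by φ(r) = sup { y ∈ [0,1] : #{i : r_i ≥ y}/n ≥ y }. Then φ is strategy-proof: for every profile r, voter i, and profile s differing from r only in coordinate i, either φ(s) ≥ φ(r) ≥ r_i or φ(s) ≤ φ(r) ≤ r_i. -/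
/-!
`φ(r)` is the supremum of the admissible levels `y ∈ [0,1]`, those supported by at least `y n`
voters. Only voter `i`'s vote at a level `y` depends on `r i`, and it is fixed on either side of
`r i`: it never supports a level `y > r i` and always supports a level `y ≤ r i`. So if
`r i < φ(r)`, every admissible level of `r` above `r i` stays admissible for `s`, whence
`φ(r) ≤ φ(s)`. If `φ(r) < r i`, an admissible level `y > φ(r)` of `s`, truncated to
`min y (r i)`, would be admissible for `r`, contradicting the definition of `φ(r)`.
-/

/-- The linear (uniform) median on `[0,1]^n`, defined via the grading curve `g(y) = y`. -/
noncomputable def linMed (n : ℕ) (r : Fin n → ℝ) : ℝ :=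
  sSup {y : ℝ | y ∈ Set.Icc (0 : ℝ) 1 ∧
    y ≤ ((Finset.univ.filter (fun i => y ≤ r i)).card : ℝ) / n}

namespace LinMed

variable {n : ℕ} {r s : Fin n → ℝ}

def admissibleSet (n : ℕ) (r : Fin n → ℝ) : Set ℝ :=
  {y : ℝ | y ∈ Set.Icc (0 : ℝ) 1 ∧
    y ≤ ((Finset.univ.filter (fun i => y ≤ r i)).card : ℝ) / n}

theorem zero_mem_admissibleSet : (0 : ℝ) ∈ admissibleSet n r :=
  ⟨⟨le_rfl, zero_le_one⟩, by positivity⟩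

theorem bddAbove_admissibleSet : BddAbove (admissibleSet n r) :=
  ⟨1, fun _ hy => hy.1.2⟩

theorem le_linMed {y : ℝ} (hy : y ∈ admissibleSet n r) : y ≤ linMed n r :=
  le_csSup bddAbove_admissibleSet hy

theorem linMed_nonneg : 0 ≤ linMed n r :=
  le_linMed zero_mem_admissibleSet

theorem mem_admissibleSet_of_le {y z : ℝ} (hy : y ∈ admissibleSet n r) (hz : 0 ≤ z)
    (hzy : z ≤ y) (hsupp : ∀ j, y ≤ r j → z ≤ s j) : z ∈ admissibleSet n s := by
  refine ⟨⟨hz, hzy.trans hy.1.2⟩, ?_⟩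
  have hcard : (Finset.univ.filter (fun j => y ≤ r j)).card ≤
      (Finset.univ.filter (fun j => z ≤ s j)).card :=
    Finset.card_le_card (Finset.monotone_filter_right _ fun j _ => hsupp j)
  calc z ≤ y := hzy
    _ ≤ _ := hy.2
    _ ≤ _ := by gcongr

variable {i : Fin n}

theorem le_linMed_of_lt_linMed (hsi : ∀ j, j ≠ i → s j = r j) (h : r i < linMed n r) :
    linMed n r ≤ linMed n s := by
  by_contra! hlt
  obtain ⟨y, hy, hy_gt⟩ := exists_lt_of_lt_csSup ⟨0, zero_mem_admissibleSet⟩ (max_lt h hlt)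
  have hy_s : y ∈ admissibleSet n s := by
    refine mem_admissibleSet_of_le hy hy.1.1 le_rfl fun j hj => ?_
    have hji : j ≠ i := by
      rintro rfl
      exact (le_max_left _ _).not_gt (hj.trans_lt' hy_gt)
    rwa [hsi j hji]
  exact (le_max_right _ _).not_gt (hy_gt.trans_le (le_linMed hy_s))

theorem linMed_le_of_linMed_lt (hsi : ∀ j, j ≠ i → s j = r j) (h : linMed n r < r i) :
    linMed n s ≤ linMed n r := by
  refine csSup_le ⟨0, zero_mem_admissibleSet⟩ fun y hy => ?_
  by_contra! hlt
  have hz_r : min y (r i) ∈ admissibleSet n r := by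
    refine mem_admissibleSet_of_le hy (linMed_nonneg.trans (le_min hlt.le h.le))
      (min_le_left _ _) fun j hj => ?_
    by_cases hji : j = i
    · exact hji ▸ min_le_right _ _
    · exact (min_le_left _ _).trans (hsi j hji ▸ hj)
  exact (lt_min hlt h).not_ge (le_linMed hz_r)

end LinMed

open LinMed in
theorem linMed_strategyProof_general (n : ℕ) :
    ∀ r s : Fin n → ℝ, (∀ j, r j ∈ Set.Icc (0 : ℝ) 1) → (∀ j, s j ∈ Set.Icc (0 : ℝ) 1) →
      ∀ i : Fin n, (∀ j, j ≠ i → s j = r j) →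
      (linMed n s ≥ linMed n r ∧ linMed n r ≥ r i) ∨
      (linMed n s ≤ linMed n r ∧ linMed n r ≤ r i) := by
  intro r s _ _ i hsi
  rcases lt_trichotomy (r i) (linMed n r) with h | h | h
  · exact Or.inl ⟨le_linMed_of_lt_linMed hsi h, h.le⟩
  · rcases le_total (linMed n s) (linMed n r) with hsr | hrs
    · exact Or.inr ⟨hsr, h.ge⟩
    · exact Or.inl ⟨hrs, h.le⟩
  · exact Or.inr ⟨linMed_le_of_linMed_lt hsi h, h.le⟩

/-- The linear median is strategy-proof on `[0,1]^n`. -/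
theorem linMed_strategyProof (n : ℕ) (hn : 0 < n) :
    ∀ r s : Fin n → ℝ, (∀ j, r j ∈ Set.Icc (0 : ℝ) 1) → (∀ j, s j ∈ Set.Icc (0 : ℝ) 1) →
      ∀ i : Fin n, (∀ j, j ≠ i → s j = r j) →
      (linMed n s ≥ linMed n r ∧ linMed n r ≥ r i) ∨
      (linMed n s ≤ linMed n r ∧ linMed n r ≤ r i) :=
  linMed_strategyProof_general n
end

section
/- The linear median φ(r) = sup { y ∈ [0,1] : #{i : r_i ≥ y}/n ≥ y } on [0,1]^n coincides with the median of the list (r_1, …, r_n, 0, 1/n, 2/n, …, (n−1)/n, 1), i.e., with Moulin's median formula using n+1 phantoms uniformly spaced in [0,1]. -/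
/-- The `k`-th smallest element (0-indexed) of a list of reals. -/
noncomputable def nthSmallest (l : List ℝ) (k : ℕ) : ℝ :=
  ((l : Multiset ℝ).sort (· ≤ ·)).getD k 0

/-- The median of `2n+1` reals: the `(n+1)`-st smallest. -/
noncomputable def medOdd (n : ℕ) (l : List ℝ) : ℝ := nthSmallest l n

/-!
The median `m` of the `2n+1` numbers is characterised by: `y ≤ m` iff at most `n` of them lie
strictly below `y`. Below `y` lie the `n - #{i | y ≤ rᵢ}` voters with `rᵢ < y` and the
`min (n+1) ⌈n y⌉` phantoms `k/n < y`, so `y ≤ m` iff `⌈n y⌉ ≤ #{i | y ≤ rᵢ}`, i.e.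
`y ≤ #{i | y ≤ rᵢ} / n`. Hence the set whose supremum defines the linear median is
`[0,1] ∩ (-∞, m] = [0, m]`.
-/

open Finset

theorem List.Pairwise.le_getElem_iff_countP_lt_le {α : Type*} [LinearOrder α] {L : List α}
    (hL : L.Pairwise (· ≤ ·)) {k : ℕ} (hk : k < L.length) (y : α) :
    y ≤ L[k] ↔ L.countP (· < y) ≤ k := by
  have hsplit (m : ℕ) :
      L.countP (· < y) = (L.take m).countP (· < y) + (L.drop m).countP (· < y) := by
    rw [← List.countP_append, List.take_append_drop]
  constructor
  · intro hy
    have hdrop : (L.drop k).countP (· < y) = 0 := by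
      refine List.countP_eq_zero.2 fun a ha => ?_
      obtain ⟨j, hj, rfl⟩ := List.getElem_of_mem ha
      simp only [List.getElem_drop, decide_eq_true_eq, not_lt]
      exact hy.trans <| hL.rel_get_of_le (a := ⟨k, hk⟩)
        (b := ⟨k + j, by simp only [List.length_drop] at hj; omega⟩) (by simp)
    have := hsplit k
    have := List.countP_le_length (p := (· < y)) (l := L.take k)
    simp only [List.length_take] at this
    omega
  · intro hcount
    by_contra! hy
    have htake : (L.take (k + 1)).countP (· < y) = k + 1 := by
      refine (List.countP_eq_length.2 fun a ha => ?_).trans (by simp; omega)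
      obtain ⟨j, hj, rfl⟩ := List.getElem_of_mem ha
      simp only [List.getElem_take, decide_eq_true_eq]
      exact (hL.rel_get_of_le (a := ⟨j, by simp at hj; omega⟩) (b := ⟨k, hk⟩)
        (by simp at hj ⊢; omega)).trans_lt hy
    have := hsplit (k + 1)
    omega

theorem le_nthSmallest_iff {l : List ℝ} {k : ℕ} (hk : k < l.length) (y : ℝ) :
    y ≤ nthSmallest l k ↔ l.countP (· < y) ≤ k := by
  have hperm : ((l : Multiset ℝ).sort (· ≤ ·)).Perm l :=
    Multiset.coe_eq_coe.mp (Multiset.sort_eq _ _)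
  rw [nthSmallest, List.getD_eq_getElem _ _ (hperm.length_eq ▸ hk),
    (Multiset.pairwise_sort _ _).le_getElem_iff_countP_lt_le, hperm.countP_eq]

theorem List.countP_ofFn {α : Type*} {n : ℕ} (f : Fin n → α) (p : α → Prop) [DecidablePred p] :
    (List.ofFn f).countP (fun a => decide (p a)) = #{i | p (f i)} := by
  rw [List.ofFn_eq_map, List.countP_map, List.countP_eq_length_filter]
  rfl

theorem card_filter_natCast_div_lt {n : ℕ} (hn : 0 < n) (y : ℝ) :
    #{k : Fin (n + 1) | (k : ℝ) / n < y} = min (n + 1) ⌈n * y⌉₊ := by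
  rw [← Fin.card_filter_val_lt]
  congr 1
  ext k
  simp only [mem_filter, mem_univ, true_and]
  rw [div_lt_iff₀ (by positivity), Nat.lt_ceil, mul_comm]

theorem le_phantom_median_iff {n : ℕ} (hn : 0 < n) (r : Fin n → ℝ) (y : ℝ) :
    y ≤ medOdd n (List.ofFn r ++ List.ofFn (fun k : Fin (n + 1) => (k : ℝ) / n)) ↔
      y ≤ (#{i | y ≤ r i} : ℝ) / n := by
  have hsplit : #{i | y ≤ r i} + #{i | ¬y ≤ r i} = n := by
    rw [card_filter_add_card_filter_not, card_univ, Fintype.card_fin]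
  simp only [not_le] at hsplit
  rw [medOdd, le_nthSmallest_iff (by simp), List.countP_append, List.countP_ofFn,
    List.countP_ofFn, card_filter_natCast_div_lt hn, le_div_iff₀ (by positivity), mul_comm,
    ← Nat.ceil_le]
  omega

theorem linMed_eq_of_forall_le_iff {n : ℕ} {r : Fin n → ℝ} {m : ℝ}
    (hm : ∀ y, y ≤ m ↔ y ≤ (#{i | y ≤ r i} : ℝ) / n) : linMed n r = m := by
  have hcard_le (y : ℝ) : (#{i | y ≤ r i} : ℝ) / n ≤ 1 :=
    div_le_one_of_le₀ (by exact_mod_cast (card_filter_le _ _).trans_eq (by simp)) (by positivity)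
  have hm0 : 0 ≤ m := (hm 0).2 (by positivity)
  have hm1 : m ≤ 1 := le_of_forall_gt_imp_ge_of_dense fun y hy =>
    not_lt.1 fun hym => hy.not_ge <| ((hm y).1 hym.le).trans (hcard_le y)
  have hset : {y : ℝ | y ∈ Set.Icc (0 : ℝ) 1 ∧ y ≤ (#{i | y ≤ r i} : ℝ) / n} = Set.Icc 0 m := by
    ext y
    simp only [Set.mem_ofPred_eq, Set.mem_Icc, ← hm]
    constructor
    · rintro ⟨⟨hy0, -⟩, hym⟩
      exact ⟨hy0, hym⟩
    · rintro ⟨hy0, hym⟩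
      exact ⟨⟨hy0, hym.trans hm1⟩, hym⟩
  rw [linMed, hset, csSup_Icc hm0]

theorem linMed_eq_phantom_median_general (n : ℕ) (hn : 0 < n)
    (r : Fin n → ℝ) :
    linMed n r =
      medOdd n (List.ofFn r ++ List.ofFn (fun k : Fin (n + 1) => (k : ℝ) / n)) :=
  linMed_eq_of_forall_le_iff fun y => le_phantom_median_iff hn r y

/-- the linear median coincides with Moulin's median formula with the
`n+1` phantoms `0, 1/n, …, (n-1)/n, 1` uniformly spaced in `[0,1]`. -/
theorem linMed_eq_phantom_median (n : ℕ) (hn : 0 < n)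
    (r : Fin n → ℝ) (hr : ∀ j, r j ∈ Set.Icc (0 : ℝ) 1) :
    linMed n r =
      medOdd n (List.ofFn r ++ List.ofFn (fun k : Fin (n + 1) => (k : ℝ) / n)) :=
  linMed_eq_phantom_median_general n hn r
end

section
/- The linear median is proportional: for every n and every profile X ∈ {0,1}^n, φ(X) = (∑_i X_i)/n, where φ(r) = sup { y ∈ [0,1] : #{i : r_i ≥ y}/n ≥ y }. -/
/-! On a 0/1 profile every threshold `y ∈ (0, 1]` is met by exactly the voters with `X i = 1`,
so with `k` such voters the admissible set is `[0, k/n]`: its greatest element is `k/n = ∑ X i / n`. -/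

section BinaryProfile

variable {ι : Type*} [Fintype ι] {X : ι → ℝ}

theorem sum_eq_card_filter_eq_one_of_binary (hX : ∀ i, X i = 0 ∨ X i = 1) :
    ∑ i, X i = (Finset.univ.filter (fun i => X i = 1)).card := by
  rw [Finset.card_filter, Nat.cast_sum]
  refine Finset.sum_congr rfl fun i _ => ?_
  rcases hX i with h | h <;> simp [h]

theorem filter_le_eq_filter_eq_one_of_binary (hX : ∀ i, X i = 0 ∨ X i = 1)
    {y : ℝ} (hy0 : 0 < y) (hy1 : y ≤ 1) :
    Finset.univ.filter (fun i => y ≤ X i) = Finset.univ.filter (fun i => X i = 1) := by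
  ext i
  rcases hX i with h | h <;> simp [h, hy0.not_ge, hy1]

end BinaryProfile

theorem isGreatest_linMed_set_of_binary {n : ℕ} {X : Fin n → ℝ}
    (hX : ∀ i, X i = 0 ∨ X i = 1) :
    IsGreatest {y : ℝ | y ∈ Set.Icc (0 : ℝ) 1 ∧
        y ≤ ((Finset.univ.filter (fun i => y ≤ X i)).card : ℝ) / n}
      ((Finset.univ.filter (fun i => X i = 1)).card / n) := by
  set k := (Finset.univ.filter (fun i => X i = 1)).card
  have hk0 : (0 : ℝ) ≤ k / n := by positivity
  have hk1 : (k : ℝ) / n ≤ 1 := by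
    refine div_le_one_of_le₀ ?_ n.cast_nonneg
    exact_mod_cast (Finset.card_filter_le _ _).trans_eq (Finset.card_fin n)
  refine ⟨⟨⟨hk0, hk1⟩, ?_⟩, fun y ⟨⟨_, hy1⟩, hy⟩ => ?_⟩
  · rcases hk0.eq_or_lt with h | h
    · rw [← h]; positivity
    · rw [filter_le_eq_filter_eq_one_of_binary hX h hk1]
  · rcases le_or_gt y 0 with h | h
    · exact h.trans hk0
    · rwa [filter_le_eq_filter_eq_one_of_binary hX h hy1] at hy

theorem linMed_proportional_general (n : ℕ)
    (X : Fin n → ℝ) (hX : ∀ i, X i = 0 ∨ X i = 1) :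
    linMed n X = (∑ i, X i) / n := by
  rw [sum_eq_card_filter_eq_one_of_binary hX]
  exact (isGreatest_linMed_set_of_binary hX).csSup_eq

/-- the linear median is proportional: on any 0/1 profile it returns the
fraction of ones. -/
theorem linMed_proportional (n : ℕ) (hn : 0 < n)
    (X : Fin n → ℝ) (hX : ∀ i, X i = 0 ∨ X i = 1) :
    linMed n X = (∑ i, X i) / n :=
  linMed_proportional_general n X hX
end

section
/- Let φ : [0,1]^n → [0,1] be strategy-proof and proportional, i.e., φ(X) = (∑_i X_i)/n for every X ∈ {0,1}^n. Then φ equals the linear median: φ(r) = sup { y ∈ [0,1] : #{i : r_i ≥ y}/n ≥ y } for all profiles r. -/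
open Function Set

theorem update_induction {ι α : Type*} [Fintype ι] [DecidableEq ι] (Q : (ι → α) → Prop)
    {r t : ι → α} (hr : Q r) (step : ∀ p j, p j = r j → Q p → Q (update p j (t j))) : Q t := by
  suffices ∀ T : Finset ι, Q (T.piecewise t r) by simpa using this Finset.univ
  intro T
  induction T using Finset.induction_on with
  | empty => simpa using hr
  | insert j T hj ih =>
    rw [Finset.piecewise_insert]
    exact step _ j (Finset.piecewise_eq_of_notMem _ _ _ hj) ih

theorem update_mem_Icc {ι : Type*} [DecidableEq ι] {r : ι → ℝ} (hr : ∀ j, r j ∈ Icc (0 : ℝ) 1)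
    (i : ι) {x : ℝ} (hx : x ∈ Icc (0 : ℝ) 1) : ∀ j, update r i x j ∈ Icc (0 : ℝ) 1 :=
  (forall_update_iff r fun _ y => y ∈ Icc (0 : ℝ) 1).2 ⟨hx, fun j _ => hr j⟩

def StrategyProof {ι : Type*} (φ : (ι → ℝ) → ℝ) : Prop :=
  ∀ r s : ι → ℝ, (∀ j, r j ∈ Icc (0 : ℝ) 1) → (∀ j, s j ∈ Icc (0 : ℝ) 1) →
    ∀ i : ι, (∀ j, j ≠ i → s j = r j) →
    (φ s ≥ φ r ∧ φ r ≥ r i) ∨ (φ s ≤ φ r ∧ φ r ≤ r i)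

namespace StrategyProof

variable {ι : Type*} [DecidableEq ι] {φ : (ι → ℝ) → ℝ} {r : ι → ℝ} {i : ι} {x : ℝ}

theorem of_update (hφ : StrategyProof φ) (hr : ∀ j, r j ∈ Icc (0 : ℝ) 1) (i : ι)
    (hx : x ∈ Icc (0 : ℝ) 1) :
    (φ (update r i x) ≥ φ r ∧ φ r ≥ r i) ∨ (φ (update r i x) ≤ φ r ∧ φ r ≤ r i) :=
  hφ r _ hr (update_mem_Icc hr i hx) i fun _ hj => update_of_ne hj x r

theorem of_update_symm (hφ : StrategyProof φ) (hr : ∀ j, r j ∈ Icc (0 : ℝ) 1) (i : ι)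
    (hx : x ∈ Icc (0 : ℝ) 1) :
    (φ r ≥ φ (update r i x) ∧ φ (update r i x) ≥ x) ∨
      (φ r ≤ φ (update r i x) ∧ φ (update r i x) ≤ x) := by
  have := hφ _ r (update_mem_Icc hr i hx) hr i fun _ hj => (update_of_ne hj x r).symm
  rwa [update_self] at this

theorem le_update (hφ : StrategyProof φ) (hr : ∀ j, r j ∈ Icc (0 : ℝ) 1)
    (hx : x ∈ Icc (0 : ℝ) 1) (hrx : r i ≤ x) : φ r ≤ φ (update r i x) := by
  rcases hφ.of_update hr i hx with ⟨h, -⟩ | ⟨-, hφri⟩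
  · exact h
  · rcases hφ.of_update_symm hr i hx with ⟨-, h⟩ | ⟨h, -⟩ <;> linarith

theorem min_le_update (hφ : StrategyProof φ) (hr : ∀ j, r j ∈ Icc (0 : ℝ) 1) (i : ι)
    (hx : x ∈ Icc (0 : ℝ) 1) : min (φ r) x ≤ φ (update r i x) := by
  rcases hφ.of_update_symm hr i hx with ⟨-, h⟩ | ⟨h, -⟩
  · exact (min_le_right _ _).trans h
  · exact (min_le_left _ _).trans h

theorem update_eq_of_lt (hφ : StrategyProof φ) (hr : ∀ j, r j ∈ Icc (0 : ℝ) 1)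
    (hx : x ∈ Icc (0 : ℝ) 1) (hri : r i < φ r) (hxφ : x ≤ φ r) : φ (update r i x) = φ r := by
  rcases hφ.of_update hr i hx with ⟨h, -⟩ | ⟨-, h⟩
  · rcases hφ.of_update_symm hr i hx with ⟨h', -⟩ | ⟨-, h'⟩ <;> linarith
  · linarith

end StrategyProof

noncomputable def thresholdProfile {ι : Type*} (r : ι → ℝ) (y : ℝ) : ι → ℝ :=
  fun i => if y ≤ r i then 1 else 0

theorem thresholdProfile_mem_Icc {ι : Type*} (r : ι → ℝ) (y : ℝ) (j : ι) :
    thresholdProfile r y j ∈ Icc (0 : ℝ) 1 := by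
  unfold thresholdProfile; split_ifs <;> norm_num

section Threshold

variable {ι : Type*} [Fintype ι] [DecidableEq ι] {φ : (ι → ℝ) → ℝ} {r : ι → ℝ}

theorem le_of_le_thresholdProfile (hφ : StrategyProof φ) (hr : ∀ j, r j ∈ Icc (0 : ℝ) 1)
    {y : ℝ} (hy : y ≤ φ (thresholdProfile r y)) : y ≤ φ r := by
  refine (update_induction (fun p => (∀ j, p j ∈ Icc (0 : ℝ) 1) ∧ y ≤ φ p)
    ⟨thresholdProfile_mem_Icc r y, hy⟩ ?_).2
  rintro p j hpj ⟨hp, hyp⟩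
  refine ⟨update_mem_Icc hp j (hr j), ?_⟩
  by_cases hyr : y ≤ r j
  · exact (le_min hyp hyr).trans (hφ.min_le_update hp j (hr j))
  · have : p j ≤ r j := by simpa [hpj, thresholdProfile, hyr] using (hr j).1
    exact hyp.trans (hφ.le_update hp (hr j) this)

theorem le_thresholdProfile (hφ : StrategyProof φ) (hr : ∀ j, r j ∈ Icc (0 : ℝ) 1)
    (hφr : 0 ≤ φ r) : φ r ≤ φ (thresholdProfile r (φ r)) := by
  set a := φ r
  refine (update_induction (fun p => (∀ j, p j ∈ Icc (0 : ℝ) 1) ∧ a ≤ φ p)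
    ⟨hr, le_rfl⟩ ?_).2
  rintro p j hpj ⟨hp, hap⟩
  have hj := thresholdProfile_mem_Icc r a j
  refine ⟨update_mem_Icc hp j hj, ?_⟩
  by_cases har : a ≤ r j
  · refine hap.trans (hφ.le_update hp hj ?_)
    simpa [hpj, thresholdProfile, har] using (hr j).2
  · -- uncompromisingness: voter `j` is below the outcome, and so is `0`
    have hdrop : thresholdProfile r a j ≤ φ p := by simpa [thresholdProfile, har] using hφr.trans hap
    rw [hφ.update_eq_of_lt hp hj (by linarith [not_le.mp har]) hdrop]
    exact hap

end Threshold

theorem linMed_eq_of_isGreatest {n : ℕ} {r : Fin n → ℝ} {a : ℝ} (ha : 0 ≤ a)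
    (hmem : a ≤ ((Finset.univ.filter (fun i => a ≤ r i)).card : ℝ) / n)
    (hmax : ∀ y, y ≤ ((Finset.univ.filter (fun i => y ≤ r i)).card : ℝ) / n → y ≤ a) :
    linMed n r = a := by
  have hcard : ((Finset.univ.filter (fun i => a ≤ r i)).card : ℝ) / n ≤ 1 :=
    div_le_one_of_le₀ (by exact_mod_cast (Finset.card_filter_le _ _).trans_eq (by simp))
      (Nat.cast_nonneg n)
  exact IsGreatest.csSup_eq ⟨⟨⟨ha, hmem.trans hcard⟩, hmem⟩, fun y hy => hmax y hy.2⟩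

theorem sp_proportional_eq_linMed_general (n : ℕ) (φ : (Fin n → ℝ) → ℝ)
    (hSP : ∀ r s : Fin n → ℝ,
      (∀ j, r j ∈ Set.Icc (0 : ℝ) 1) → (∀ j, s j ∈ Set.Icc (0 : ℝ) 1) →
      ∀ i : Fin n, (∀ j, j ≠ i → s j = r j) →
      (φ s ≥ φ r ∧ φ r ≥ r i) ∨ (φ s ≤ φ r ∧ φ r ≤ r i))
    (hprop : ∀ X : Fin n → ℝ, (∀ i, X i = 0 ∨ X i = 1) → φ X = (∑ i, X i) / n) :
    ∀ r : Fin n → ℝ, (∀ j, r j ∈ Set.Icc (0 : ℝ) 1) → φ r = linMed n r := by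
  intro r hr
  have hφ : StrategyProof φ := hSP
  have hthreshold : ∀ y, φ (thresholdProfile r y) =
      ((Finset.univ.filter (fun i => y ≤ r i)).card : ℝ) / n := by
    intro y
    rw [hprop _ fun i => by unfold thresholdProfile; split_ifs <;> simp]
    simp [thresholdProfile, Finset.sum_boole]
  have hmax : ∀ y, y ≤ ((Finset.univ.filter (fun i => y ≤ r i)).card : ℝ) / n → y ≤ φ r :=
    fun y hy => le_of_le_thresholdProfile hφ hr ((hthreshold y).symm ▸ hy)
  have hφr : 0 ≤ φ r := hmax 0 (by positivity)
  have hmem := le_thresholdProfile hφ hr hφr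
  rw [hthreshold] at hmem
  exact (linMed_eq_of_isGreatest hφr hmem hmax).symm

/-- a strategy-proof and proportional voting rule on `[0,1]^n` is the
linear median. -/
theorem sp_proportional_eq_linMed (n : ℕ) (hn : 0 < n) (φ : (Fin n → ℝ) → ℝ)
    (hrange : ∀ r : Fin n → ℝ, (∀ j, r j ∈ Set.Icc (0 : ℝ) 1) → φ r ∈ Set.Icc (0 : ℝ) 1)
    (hSP : ∀ r s : Fin n → ℝ,
      (∀ j, r j ∈ Set.Icc (0 : ℝ) 1) → (∀ j, s j ∈ Set.Icc (0 : ℝ) 1) →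
      ∀ i : Fin n, (∀ j, j ≠ i → s j = r j) →
      (φ s ≥ φ r ∧ φ r ≥ r i) ∨ (φ s ≤ φ r ∧ φ r ≤ r i))
    (hprop : ∀ X : Fin n → ℝ, (∀ i, X i = 0 ∨ X i = 1) → φ X = (∑ i, X i) / n) :
    ∀ r : Fin n → ℝ, (∀ j, r j ∈ Set.Icc (0 : ℝ) 1) → φ r = linMed n r :=
  sp_proportional_eq_linMed_general n φ hSP hprop
end

section
/- A strategy-proof voting rule determines its phantom values on extreme profiles monotonically: if φ : {0,1}^n → ℝ is the restriction of a strategy-proof rule on [0,1]^n to profiles of 0s and 1s, then φ is monotone: X ≤ Y coordinatewise implies φ(X) ≤ φ(Y). -/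
open Finset Function

variable {ι : Type*}

/-- Strategy-proofness for single-peaked voters with peaks in `S`: when voter `i` alone changes
its report, the outcome can only move away from the peak `r i`. -/
def IsStrategyProofOn (S : Set ℝ) (φ : (ι → ℝ) → ℝ) : Prop :=
  ∀ r s : ι → ℝ, (∀ j, r j ∈ S) → (∀ j, s j ∈ S) → ∀ i : ι, (∀ j, j ≠ i → s j = r j) →
    (φ s ≥ φ r ∧ φ r ≥ r i) ∨ (φ s ≤ φ r ∧ φ r ≤ r i)

namespace IsStrategyProofOn

variable {S : Set ℝ} {φ : (ι → ℝ) → ℝ}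

theorem le_of_agree_off (hφ : IsStrategyProofOn S φ) {r s : ι → ℝ}
    (hr : ∀ j, r j ∈ S) (hs : ∀ j, s j ∈ S) {i : ι} (hagree : ∀ j, j ≠ i → s j = r j)
    (hi : r i ≤ s i) : φ r ≤ φ s := by
  rcases hφ r s hr hs i hagree with ⟨hup, _⟩ | ⟨_, hr_le⟩
  · exact hup
  -- Otherwise `φ r ≤ r i ≤ s i`; strategy-proofness at `s` then forbids `φ s < φ r`.
  rcases hφ s r hs hr i fun j hj => (hagree j hj).symm with ⟨_, hs_ge⟩ | ⟨hdown, _⟩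
  · linarith
  · exact hdown

theorem le_update (hφ : IsStrategyProofOn S φ) [DecidableEq ι] {r : ι → ℝ}
    (hr : ∀ j, r j ∈ S) {i : ι} {t : ℝ} (ht : t ∈ S) (hi : r i ≤ t) :
    φ r ≤ φ (update r i t) := by
  refine hφ.le_of_agree_off hr (fun j => ?_) (fun j hj => update_of_ne hj t r) (by simpa)
  rcases eq_or_ne j i with rfl | hj
  · simpa
  · simpa [hj] using hr j

theorem monotoneOn [Fintype ι] (hφ : IsStrategyProofOn S φ) :
    MonotoneOn φ {r | ∀ j, r j ∈ S} := by
  classical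
  intro X hX Y hY hXY
  have hmem : ∀ T : Finset ι, ∀ j, T.piecewise Y X j ∈ S := fun T j =>
    T.piecewise_cases Y X (· ∈ S) (hY j) (hX j)
  -- Raise the coordinates of `X` to those of `Y` one voter at a time.
  have hchain : ∀ T : Finset ι, φ X ≤ φ (T.piecewise Y X) := by
    intro T
    induction T using Finset.induction_on with
    | empty => simp
    | insert a T ha ih =>
      rw [piecewise_insert]
      exact ih.trans (hφ.le_update (hmem T) (hY a) (by simpa [ha] using hXY a))
  simpa using hchain univ

end IsStrategyProofOn

theorem sp_phantom_monotone_general (n : ℕ) (φ : (Fin n → ℝ) → ℝ)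
    (hSP : ∀ r s : Fin n → ℝ,
      (∀ j, r j ∈ Set.Icc (0 : ℝ) 1) → (∀ j, s j ∈ Set.Icc (0 : ℝ) 1) →
      ∀ i : Fin n, (∀ j, j ≠ i → s j = r j) →
      (φ s ≥ φ r ∧ φ r ≥ r i) ∨ (φ s ≤ φ r ∧ φ r ≤ r i)) :
    ∀ X Y : Fin n → ℝ, (∀ i, X i = 0 ∨ X i = 1) → (∀ i, Y i = 0 ∨ Y i = 1) →
      (∀ i, X i ≤ Y i) → φ X ≤ φ Y := by
  have hextreme : ∀ Z : Fin n → ℝ, (∀ i, Z i = 0 ∨ Z i = 1) → ∀ i, Z i ∈ Set.Icc (0 : ℝ) 1 := by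
    intro Z hZ i
    rcases hZ i with h | h <;> simp [h]
  intro X Y hX hY hXY
  exact IsStrategyProofOn.monotoneOn hSP (hextreme X hX) (hextreme Y hY) hXY

/-- the restriction of a strategy-proof rule on `[0,1]^n` to extreme
(0/1) profiles is monotone. -/
theorem sp_phantom_monotone (n : ℕ) (φ : (Fin n → ℝ) → ℝ)
    (hrange : ∀ r : Fin n → ℝ, (∀ j, r j ∈ Set.Icc (0 : ℝ) 1) → φ r ∈ Set.Icc (0 : ℝ) 1)
    (hSP : ∀ r s : Fin n → ℝ,
      (∀ j, r j ∈ Set.Icc (0 : ℝ) 1) → (∀ j, s j ∈ Set.Icc (0 : ℝ) 1) →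
      ∀ i : Fin n, (∀ j, j ≠ i → s j = r j) →
      (φ s ≥ φ r ∧ φ r ≥ r i) ∨ (φ s ≤ φ r ∧ φ r ≤ r i)) :
    ∀ X Y : Fin n → ℝ, (∀ i, X i = 0 ∨ X i = 1) → (∀ i, Y i = 0 ∨ Y i = 1) →
      (∀ i, X i ≤ Y i) → φ X ≤ φ Y :=
  sp_phantom_monotone_general n φ hSP
end

section
/- Fix n ≥ 2, an index i, weights w_j ≥ 0 with w_i > 0 and ∑_{j≠i} w_j > 0, and p > 1. For the profile s with s_j = m for j ≠ i and s_i ∈ (m, M], the unique minimizer s* of x ↦ ∑_j w_j |x − s_j|^p satisfies s* = m + (s_i − m)·(1 + ((∑_{j≠i} w_j)/w_i)^{1/(p−1)})^{−1}; in particular m < s* < s_i. -/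
/-!
The loss reduces to `x ↦ w i * |x - t| ^ p + W * |x - m| ^ p` with `W = ∑_{j ≠ i} w j`, a positive
combination of strictly convex functions. A critical point is therefore its unique minimizer, and
on `(m, t)` the critical-point equation reads `W (x - m)^(p-1) = w i (t - x)^(p-1)`: it is solved by
dividing `[m, t]` in the ratio `1 : r`, where `r ^ (p - 1) = W / w i`.
-/

open Real Set

section

variable {p : ℝ}

theorem strictConvexOn_abs_rpow (hp : 1 < p) : StrictConvexOn ℝ univ fun x : ℝ => |x| ^ p := by
  refine ⟨convex_univ, fun x _ y _ hxy a b ha hb hab => ?_⟩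
  simp only [smul_eq_mul]
  rcases eq_or_ne |x| |y| with hxy_abs | hxy_abs
  · -- `|x| = |y|` with `x ≠ y` forces `y = -x ≠ 0`, and then the combination shrinks the modulus
    have hy : y = -x := by linarith [(abs_eq_abs.mp hxy_abs).resolve_left hxy]
    have hx : x ≠ 0 := by rintro rfl; simp_all
    have hlt : |a * x + b * y| < |x| := by
      rw [hy, show a * x + b * -x = (a - b) * x by ring, abs_mul]
      exact mul_lt_of_lt_one_left (abs_pos.2 hx) (abs_lt.2 ⟨by linarith, by linarith⟩)
    calc |a * x + b * y| ^ p < |x| ^ p := rpow_lt_rpow (abs_nonneg _) hlt (by linarith)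
      _ = a * |x| ^ p + b * |y| ^ p := by rw [← hxy_abs, ← add_mul, hab, one_mul]
  · calc |a * x + b * y| ^ p ≤ (a * |x| + b * |y|) ^ p := by
          refine rpow_le_rpow (abs_nonneg _) ?_ (by linarith)
          simpa [abs_mul, abs_of_pos ha, abs_of_pos hb] using abs_add_le (a * x) (b * y)
      _ < a * |x| ^ p + b * |y| ^ p := by
          simpa using (strictConvexOn_rpow hp).2 (abs_nonneg x) (abs_nonneg y) hxy_abs ha hb hab

theorem StrictConvexOn.const_mul {s : Set ℝ} {f : ℝ → ℝ} {c : ℝ} (hc : 0 < c)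
    (hf : StrictConvexOn ℝ s f) : StrictConvexOn ℝ s fun x => c * f x := by
  refine ⟨hf.1, fun x hx y hy hxy a b ha hb hab => ?_⟩
  have := mul_lt_mul_of_pos_left (hf.2 hx hy hxy ha hb hab) hc
  simp only [smul_eq_mul] at this ⊢
  linarith

theorem strictConvexOn_abs_sub_rpow (hp : 1 < p) (a : ℝ) :
    StrictConvexOn ℝ univ fun x : ℝ => |x - a| ^ p := by
  simpa [Function.comp_def, sub_eq_add_neg] using (strictConvexOn_abs_rpow hp).translate_left (-a)

theorem ConvexOn.isMinOn_univ_of_hasDerivAt {f : ℝ → ℝ} {x : ℝ} (hf : ConvexOn ℝ univ f)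
    (h : HasDerivAt f 0 x) : IsMinOn f univ x :=
  hf.isMinOn_of_rightDeriv_eq_zero (by simp)
    (h.hasDerivWithinAt.derivWithin (uniqueDiffWithinAt_Ioi x))

theorem hasDerivAt_abs_sub_rpow_of_lt {a x : ℝ} (hp : 1 ≤ p) (hax : a < x) :
    HasDerivAt (fun y => |y - a| ^ p) (p * (x - a) ^ (p - 1)) x := by
  have h := ((hasDerivAt_id x).sub_const a).rpow_const (p := p) (Or.inr hp)
  rw [one_mul] at h
  refine h.congr_of_eventuallyEq ?_
  filter_upwards [eventually_gt_nhds hax] with y hy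
  rw [abs_of_pos (sub_pos.2 hy)]
  rfl

theorem hasDerivAt_abs_sub_rpow_of_gt {a x : ℝ} (hp : 1 ≤ p) (hxa : x < a) :
    HasDerivAt (fun y => |y - a| ^ p) (-(p * (a - x) ^ (p - 1))) x := by
  have h := ((hasDerivAt_id x).const_sub a).rpow_const (p := p) (Or.inr hp)
  rw [neg_one_mul, neg_mul] at h
  refine h.congr_of_eventuallyEq ?_
  filter_upwards [eventually_lt_nhds hxa] with y hy
  rw [abs_sub_comm, abs_of_pos (sub_pos.2 hy)]
  rfl

theorem add_sub_mul_inv_one_add_mem_Ioo {a b r : ℝ} (hab : a < b) (hr : 0 < r) :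
    a + (b - a) * (1 + r)⁻¹ ∈ Ioo a b := by
  have h0 : 0 < (1 + r)⁻¹ := by positivity
  have h1 : (1 + r)⁻¹ < 1 := inv_lt_one_of_one_lt₀ (by linarith)
  constructor <;> nlinarith

variable {α β : ℝ}

theorem strictConvexOn_two_point_loss (hp : 1 < p) (hα : 0 < α) (hβ : 0 < β) (a b : ℝ) :
    StrictConvexOn ℝ univ fun x : ℝ => α * |x - b| ^ p + β * |x - a| ^ p :=
  ((strictConvexOn_abs_sub_rpow hp b).const_mul hα).add
    ((strictConvexOn_abs_sub_rpow hp a).const_mul hβ)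

theorem hasDerivAt_two_point_loss_eq_zero {a b : ℝ} (hp : 1 < p) (hα : 0 < α) (hβ : 0 < β)
    (hab : a < b) :
    HasDerivAt (fun x : ℝ => α * |x - b| ^ p + β * |x - a| ^ p) 0
      (a + (b - a) * (1 + (β / α) ^ (1 / (p - 1)))⁻¹) := by
  set r := (β / α) ^ (1 / (p - 1)) with hr_def
  set x₀ := a + (b - a) * (1 + r)⁻¹ with hx₀_def
  have hr : 0 < r := by positivity
  have hrp : r ^ (p - 1) = β / α := by
    rw [hr_def, ← rpow_mul (by positivity), one_div_mul_cancel (by linarith), rpow_one]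
  have hx₀ : x₀ ∈ Ioo a b := add_sub_mul_inv_one_add_mem_Ioo hab hr
  have hleft : x₀ - a = (b - a) * (1 + r)⁻¹ := by ring
  have hright : b - x₀ = (b - a) * (1 + r)⁻¹ * r := by rw [hx₀_def]; field_simp; ring
  have hbalance : β * (x₀ - a) ^ (p - 1) = α * (b - x₀) ^ (p - 1) := by
    rw [hleft, hright, mul_rpow (by positivity) hr.le, hrp]
    field_simp
  have h := ((hasDerivAt_abs_sub_rpow_of_gt hp.le hx₀.2).const_mul α).add
    ((hasDerivAt_abs_sub_rpow_of_lt hp.le hx₀.1).const_mul β)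
  rwa [show α * -(p * (b - x₀) ^ (p - 1)) + β * (p * (x₀ - a) ^ (p - 1)) = 0 by
    linear_combination p * hbalance] at h

theorem isMinOn_two_point_loss {a b : ℝ} (hp : 1 < p) (hα : 0 < α) (hβ : 0 < β) (hab : a < b) :
    IsMinOn (fun x : ℝ => α * |x - b| ^ p + β * |x - a| ^ p) univ
      (a + (b - a) * (1 + (β / α) ^ (1 / (p - 1)))⁻¹) :=
  (strictConvexOn_two_point_loss hp hα hβ a b).convexOn.isMinOn_univ_of_hasDerivAt
    (hasDerivAt_two_point_loss_eq_zero hp hα hβ hab)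

theorem Finset.sum_mul_ite_eq_add_sum_erase_mul {ι R : Type*} [Fintype ι] [DecidableEq ι]
    [CommSemiring R] (w : ι → R) (φ : R → R) (i : ι) (t m : R) :
    ∑ j, w j * φ (if j = i then t else m) = w i * φ t + (∑ j ∈ univ.erase i, w j) * φ m := by
  rw [← add_sum_erase _ _ (mem_univ i), if_pos rfl, sum_mul]
  congr 1
  exact sum_congr rfl fun j hj => by rw [if_neg (ne_of_mem_erase hj)]

end

theorem weighted_power_loss_one_high_ballot_general
    (m M : ℝ) (n : ℕ) (i : Fin n) (p : ℝ) (hp : 1 < p)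
    (w : Fin n → ℝ) (hwi : 0 < w i)
    (hwrest : 0 < ∑ j ∈ Finset.univ.erase i, w j)
    (t : ℝ) (ht : t ∈ Set.Ioc m M) :
    let s : Fin n → ℝ := fun j => if j = i then t else m
    let f : ℝ → ℝ := fun x => ∑ j, w j * |x - s j| ^ p
    let sstar : ℝ := m + (t - m) *
      (1 + ((∑ j ∈ Finset.univ.erase i, w j) / w i) ^ (1 / (p - 1)))⁻¹
    (∀ y : ℝ, f sstar ≤ f y) ∧ (∀ x : ℝ, (∀ y : ℝ, f x ≤ f y) → x = sstar) ∧
    m < sstar ∧ sstar < t := by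
  intro s f sstar
  have hf : f = fun x => w i * |x - t| ^ p + (∑ j ∈ Finset.univ.erase i, w j) * |x - m| ^ p :=
    funext fun x => Finset.sum_mul_ite_eq_add_sum_erase_mul w (fun y => |x - y| ^ p) i t m
  have hmin : IsMinOn f univ sstar := hf ▸ isMinOn_two_point_loss hp hwi hwrest ht.1
  have hconv := hf ▸ strictConvexOn_two_point_loss hp hwi hwrest m t
  have hmem : sstar ∈ Ioo m t := add_sub_mul_inv_one_add_mem_Ioo ht.1 (by positivity)
  exact ⟨fun y => hmin (mem_univ y),
    fun x hx => hconv.eq_of_isMinOn (fun y _ => hx y) hmin (mem_univ x) (mem_univ sstar),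
    hmem.1, hmem.2⟩

/-- with all ballots at `m` except voter `i`'s ballot `t ∈ (m, M]`, the
unique minimizer of the weighted `p`-th power loss is
`m + (t - m) / (1 + ((∑_{j≠i} w j)/w i)^(1/(p-1)))`, which lies strictly between `m`
and `t`. -/
theorem weighted_power_loss_one_high_ballot
    (m M : ℝ) (hmM : m < M) (n : ℕ) (hn : 2 ≤ n) (i : Fin n) (p : ℝ) (hp : 1 < p)
    (w : Fin n → ℝ) (hw : ∀ j, 0 ≤ w j) (hwi : 0 < w i)
    (hwrest : 0 < ∑ j ∈ Finset.univ.erase i, w j)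
    (t : ℝ) (ht : t ∈ Set.Ioc m M) :
    let s : Fin n → ℝ := fun j => if j = i then t else m
    let f : ℝ → ℝ := fun x => ∑ j, w j * |x - s j| ^ p
    let sstar : ℝ := m + (t - m) *
      (1 + ((∑ j ∈ Finset.univ.erase i, w j) / w i) ^ (1 / (p - 1)))⁻¹
    (∀ y : ℝ, f sstar ≤ f y) ∧ (∀ x : ℝ, (∀ y : ℝ, f x ≤ f y) → x = sstar) ∧
    m < sstar ∧ sstar < t :=
  weighted_power_loss_one_high_ballot_general m M n i p hp w hwi hwrest t ht
end

section
/- Let med denote the median of 2n+1 real numbers (the (n+1)-st order statistic). For any reals r_1, …, r_n and any weakly increasing phantoms α_0 ≤ α_1 ≤ … ≤ α_n, the rule φ(r) = med(r_1, …, r_n, α_0, …, α_n) is strategy-proof: for every voter i and profiles r, s differing only in coordinate i, either φ(s) ≥ φ(r) ≥ r_i or φ(s) ≤ φ(r) ≤ r_i. -/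
/-- Moulin's phantom median rule: the median of the `n` ballots and `n+1` phantoms. -/
noncomputable def phantomMedian (n : ℕ) (α : Fin (n + 1) → ℝ) (r : Fin n → ℝ) : ℝ :=
  medOdd n (List.ofFn r ++ List.ofFn α)

theorem List.SortedLE.getElem_le_iff_lt_countP {α : Type*} [LinearOrder α] {l : List α}
    (hl : l.SortedLE) {k : ℕ} (hk : k < l.length) (t : α) :
    l[k] ≤ t ↔ k < l.countP (· ≤ t) := by
  have hsplit (j : ℕ) :
      l.countP (· ≤ t) = (l.take j).countP (· ≤ t) + (l.drop j).countP (· ≤ t) := by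
    rw [← List.countP_append, List.take_append_drop]
  constructor
  · intro hkt
    have hprefix : (l.take (k + 1)).countP (· ≤ t) = k + 1 := by
      rw [List.countP_eq_length.2, List.length_take_of_le hk]
      intro x hx
      obtain ⟨j, hj, rfl⟩ := List.mem_take_iff_getElem.1 hx
      simpa using (hl.getElem_le_getElem_of_le (by omega)).trans hkt
    have := hsplit (k + 1)
    omega
  · intro hcount
    by_contra hkt
    have hsuffix : (l.drop k).countP (· ≤ t) = 0 := by
      rw [List.countP_eq_zero]
      intro x hx
      obtain ⟨j, hj, rfl⟩ := List.mem_drop_iff_getElem.1 hx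
      simpa using fun h => hkt ((hl.getElem_le_getElem_of_le (by omega)).trans h)
    have hprefix := (l.take k).countP_le_length (p := (· ≤ t))
    rw [List.length_take_of_le hk.le] at hprefix
    have := hsplit k
    omega

theorem Multiset.sort_getD_le_iff {α : Type*} [LinearOrder α] {m : Multiset α} {k : ℕ}
    (hk : k < card m) (d t : α) :
    (m.sort (· ≤ ·)).getD k d ≤ t ↔ k < m.countP (· ≤ t) := by
  have hsorted := (m.pairwise_sort (· ≤ ·)).sortedLE
  rw [← m.length_sort (· ≤ ·)] at hk
  conv_rhs => rw [← m.sort_eq (· ≤ ·), Multiset.coe_countP]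
  rw [List.getD_eq_getElem _ _ hk]
  exact hsorted.getElem_le_iff_lt_countP hk t

theorem Multiset.sort_getD_cons_succ {α : Type*} [LinearOrder α] (a : α) {M : Multiset α}
    {k : ℕ} (hk : k + 1 < card M) (d : α) :
    ((a ::ₘ M).sort (· ≤ ·)).getD (k + 1) d =
      max ((M.sort (· ≤ ·)).getD k d) (min a ((M.sort (· ≤ ·)).getD (k + 1) d)) := by
  refine eq_of_forall_ge_iff fun t => ?_
  rw [max_le_iff, min_le_iff, sort_getD_le_iff (by rw [card_cons]; omega),
    sort_getD_le_iff (by omega), sort_getD_le_iff hk, countP_cons]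
  by_cases hat : a ≤ t <;>
    simp only [hat, if_true, if_false, true_or, false_or, and_true] <;> omega

theorem max_min_strategyProof {α : Type*} [LinearOrder α] (L U a b : α) :
    (max L (min b U) ≥ max L (min a U) ∧ max L (min a U) ≥ a) ∨
      (max L (min b U) ≤ max L (min a U) ∧ max L (min a U) ≤ a) := by
  grind

section

variable {n : ℕ} (α : Fin (n + 1) → ℝ)

def othersWithPhantoms (r : Fin n → ℝ) (i : Fin n) : Multiset ℝ :=
  (Finset.univ.erase i).val.map r + ↑(List.ofFn α)

theorem card_othersWithPhantoms (r : Fin n → ℝ) (i : Fin n) :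
    Multiset.card (othersWithPhantoms α r i) = 2 * n := by
  rw [othersWithPhantoms, Multiset.card_add, Multiset.card_map, ← Finset.card_def,
    Finset.card_erase_of_mem (Finset.mem_univ i), Finset.card_univ, Fintype.card_fin,
    Multiset.coe_card, List.length_ofFn]
  have := i.pos
  omega

theorem coe_ofFn_append_eq_cons_othersWithPhantoms (r : Fin n → ℝ) (i : Fin n) :
    (↑(List.ofFn r ++ List.ofFn α) : Multiset ℝ) = r i ::ₘ othersWithPhantoms α r i := by
  rw [← Multiset.coe_add, ← Fin.univ_val_map, othersWithPhantoms, ← Multiset.cons_add,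
    ← Multiset.map_cons, Finset.erase_val, Multiset.cons_erase (Finset.mem_univ_val i)]

theorem othersWithPhantoms_congr {r s : Fin n → ℝ} {i : Fin n}
    (h : ∀ j, j ≠ i → s j = r j) :
    othersWithPhantoms α s i = othersWithPhantoms α r i := by
  rw [othersWithPhantoms, othersWithPhantoms, Multiset.map_congr rfl]
  intro j hj
  exact h j (Finset.ne_of_mem_erase (Finset.mem_def.2 hj))

end

theorem phantomMedian_eq_max_min {k : ℕ} (α : Fin (k + 2) → ℝ) (r : Fin (k + 1) → ℝ)
    (i : Fin (k + 1)) :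
    phantomMedian (k + 1) α r =
      max (((othersWithPhantoms α r i).sort (· ≤ ·)).getD k 0)
        (min (r i) (((othersWithPhantoms α r i).sort (· ≤ ·)).getD (k + 1) 0)) := by
  rw [phantomMedian, medOdd, nthSmallest, coe_ofFn_append_eq_cons_othersWithPhantoms]
  exact Multiset.sort_getD_cons_succ _ (by rw [card_othersWithPhantoms]; omega) _

theorem phantomMedian_strategyProof_general (n : ℕ) (α : Fin (n + 1) → ℝ) :
    ∀ r s : Fin n → ℝ, ∀ i : Fin n, (∀ j, j ≠ i → s j = r j) →
      (phantomMedian n α s ≥ phantomMedian n α r ∧ phantomMedian n α r ≥ r i) ∨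
      (phantomMedian n α s ≤ phantomMedian n α r ∧ phantomMedian n α r ≤ r i) := by
  intro r s i hsr
  cases n with
  | zero => exact i.elim0
  | succ k =>
    rw [phantomMedian_eq_max_min α s i, phantomMedian_eq_max_min α r i,
      othersWithPhantoms_congr α hsr]
    exact max_min_strategyProof _ _ _ _

/-- Moulin's phantom median rule with weakly increasing phantoms is
strategy-proof. -/
theorem phantomMedian_strategyProof (n : ℕ) (α : Fin (n + 1) → ℝ) (hα : Monotone α) :
    ∀ r s : Fin n → ℝ, ∀ i : Fin n, (∀ j, j ≠ i → s j = r j) →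
      (phantomMedian n α s ≥ phantomMedian n α r ∧ phantomMedian n α r ≥ r i) ∨
      (phantomMedian n α s ≤ phantomMedian n α r ∧ phantomMedian n α r ≤ r i) :=
  phantomMedian_strategyProof_general n α
end
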